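/- In the graded ℚ-algebra A = ℚ[p₁, ē]/(p₁ⁿ, ē² − (−1)^{n−1}p₁^{n−1}) with deg p₁ = 4, deg ē = 2n−2 (n ≥ 2), the elements {p₁^i : 0 ≤ i ≤ n−1} ∪ {ē·p₁^i : 0 ≤ i ≤ n−1} form a ℚ-vector space basis; in particular dim_ℚ A = 2n. -/

import Mathlib

/-!
Sending `x = p₁` and `y = ē` to the two adjoined roots identifies `R[x, y]/(p(x), y² - c(x))`
with the tower `(R[x]/(p))[y]/(y² - c)`. For monic `p` of degree `d` both stages are free with
power bases `xʲ` (`j < d`) and `yᵏ` (`k < 2`), so the products `yᵏ xʲ` form an `R`-basis;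
`A` is the case `p = xⁿ`, `c = (-1)ⁿ⁻¹ xⁿ⁻¹`.
-/

open MvPolynomial

/-- The relations ideal of `H^*(G̃₃(ℝ^{2n+1}); ℚ) = ℚ[p₁,ē]/(p₁ⁿ, ē² - (-1)^{n-1} p₁^{n-1})`,
with `p₁ = X 0` and `ē = X 1`. -/
noncomputable def orGrass3Ideal (n : ℕ) : Ideal (MvPolynomial (Fin 2) ℚ) :=
  Ideal.span
    ({X 0 ^ n,
      X 1 ^ 2 - (-1 : MvPolynomial (Fin 2) ℚ) ^ (n - 1) * X 0 ^ (n - 1)} :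
      Set (MvPolynomial (Fin 2) ℚ))

open scoped Polynomial

namespace QuadraticTower

variable {R : Type*} [CommRing R] (p c : R[X])

noncomputable def ideal : Ideal (MvPolynomial (Fin 2) R) :=
  Ideal.span {Polynomial.aeval (X 0) p, X 1 ^ 2 - Polynomial.aeval (X 0) c}

noncomputable def poly : (AdjoinRoot p)[X] :=
  Polynomial.X ^ 2 - Polynomial.C (AdjoinRoot.mk p c)

abbrev QuotientRing : Type _ := MvPolynomial (Fin 2) R ⧸ ideal p c

local notation "mkQ" => Ideal.Quotient.mk (ideal p c)

lemma root_sq :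
    AdjoinRoot.root (poly p c) ^ 2 = algebraMap (AdjoinRoot p) _ (AdjoinRoot.mk p c) := by
  have hroot := AdjoinRoot.eval₂_root (poly p c)
  rwa [poly, Polynomial.eval₂_sub, Polynomial.eval₂_X_pow, Polynomial.eval₂_C, sub_eq_zero] at hroot

noncomputable def eval : MvPolynomial (Fin 2) R →ₐ[R] AdjoinRoot (poly p c) :=
  aeval ![algebraMap (AdjoinRoot p) _ (AdjoinRoot.root p), AdjoinRoot.root (poly p c)]

lemma eval_X_zero : eval p c (X 0) = algebraMap (AdjoinRoot p) _ (AdjoinRoot.root p) := by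
  simp [eval]

lemma eval_X_one : eval p c (X 1) = AdjoinRoot.root (poly p c) := by
  simp [eval]

lemma eval_aeval_X_zero (q : R[X]) :
    eval p c (Polynomial.aeval (X 0) q) = algebraMap (AdjoinRoot p) _ (AdjoinRoot.mk p q) := by
  rw [← Polynomial.aeval_algHom_apply, eval_X_zero, ← IsScalarTower.toAlgHom_apply R,
    Polynomial.aeval_algHom_apply, AdjoinRoot.aeval_eq, IsScalarTower.toAlgHom_apply]

lemma ideal_le_ker_eval : ideal p c ≤ RingHom.ker (eval p c) := by
  rw [ideal, Ideal.span_le]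
  rintro q (rfl | rfl) <;> rw [SetLike.mem_coe, RingHom.mem_ker]
  · rw [eval_aeval_X_zero, AdjoinRoot.mk_self, map_zero]
  · rw [map_sub, map_pow, eval_X_one, eval_aeval_X_zero, root_sq, sub_self]

noncomputable def toTower : QuotientRing p c →ₐ[R] AdjoinRoot (poly p c) :=
  Ideal.Quotient.liftₐ _ (eval p c) fun _ h => ideal_le_ker_eval p c h

@[simp]
lemma toTower_mk (q : MvPolynomial (Fin 2) R) : toTower p c (mkQ q) = eval p c q :=
  rfl

lemma mk_aeval_X_zero (q : R[X]) :
    mkQ (Polynomial.aeval (X 0) q) =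
      Polynomial.eval₂ (algebraMap R (QuotientRing p c)) (mkQ (X 0)) q := by
  rw [← Ideal.Quotient.mkₐ_eq_mk R, ← Polynomial.aeval_algHom_apply, Polynomial.aeval_def]

noncomputable def ofBase : AdjoinRoot p →ₐ[R] QuotientRing p c :=
  AdjoinRoot.liftAlgHom p (Algebra.ofId R _) (mkQ (X 0)) <| by
    rw [Algebra.toRingHom_ofId, ← mk_aeval_X_zero, Ideal.Quotient.eq_zero_iff_mem]
    exact Ideal.subset_span (Or.inl rfl)

noncomputable def ofTower : AdjoinRoot (poly p c) →ₐ[R] QuotientRing p c :=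
  AdjoinRoot.liftAlgHom (poly p c) (ofBase p c) (mkQ (X 1)) <| by
    have hrel : mkQ (X 1 ^ 2 - Polynomial.aeval (X 0) c) = 0 :=
      Ideal.Quotient.eq_zero_iff_mem.mpr (Ideal.subset_span (Or.inr rfl))
    rw [map_sub, map_pow, mk_aeval_X_zero, sub_eq_zero] at hrel
    rw [poly, Polynomial.eval₂_sub, Polynomial.eval₂_X_pow, Polynomial.eval₂_C, sub_eq_zero,
      hrel]
    rfl

lemma toTower_comp_ofTower : (toTower p c).comp (ofTower p c) = AlgHom.id R _ := by
  refine AdjoinRoot.algHom_ext' (AdjoinRoot.algHom_ext ?_) ?_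
  · simp [ofTower, ofBase, eval_X_zero]
  · simp [ofTower, eval_X_one]

lemma ofTower_comp_toTower : (ofTower p c).comp (toTower p c) = AlgHom.id R _ := by
  refine Ideal.Quotient.algHom_ext R (MvPolynomial.algHom_ext fun i => ?_)
  fin_cases i
  · simp [eval_X_zero, ofTower, ofBase]
  · simp [eval_X_one, ofTower]

noncomputable def quotEquivTower : QuotientRing p c ≃ₐ[R] AdjoinRoot (poly p c) :=
  .ofAlgHom _ _ (toTower_comp_ofTower p c) (ofTower_comp_toTower p c)

lemma poly_monic : (poly p c).Monic :=
  Polynomial.monic_X_pow_sub_C _ two_ne_zero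

lemma nontrivial_adjoinRoot [Nontrivial R] {p : R[X]} (hp : p.Monic) (hp0 : p.natDegree ≠ 0) :
    Nontrivial (AdjoinRoot p) :=
  nontrivial_of_ne _ 0 ((AdjoinRoot.powerBasis' hp).basis.ne_zero ⟨0, Nat.pos_of_ne_zero hp0⟩)

theorem exists_basis [Nontrivial R] (hp : p.Monic) (hp0 : p.natDegree ≠ 0) :
    ∃ b : Module.Basis (Fin 2 × Fin p.natDegree) R (QuotientRing p c),
      ∀ k j, b (k, j) = mkQ (X 1 ^ (k : ℕ) * X 0 ^ (j : ℕ)) := by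
  have := nontrivial_adjoinRoot hp hp0
  let bBase : Module.Basis (Fin p.natDegree) R (AdjoinRoot p) := (AdjoinRoot.powerBasis' hp).basis
  let bTower : Module.Basis (Fin 2) (AdjoinRoot p) (AdjoinRoot (poly p c)) :=
    (AdjoinRoot.powerBasis' (poly_monic p c)).basis.reindex (finCongr Polynomial.natDegree_X_pow_sub_C)
  refine ⟨((bBase.smulTower bTower).reindex (Equiv.prodComm _ _)).map
    (quotEquivTower p c).symm.toLinearEquiv, fun k j => ?_⟩
  rw [Module.Basis.map_apply, AlgEquiv.toLinearEquiv_apply, AlgEquiv.symm_apply_eq,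
    Module.Basis.reindex_apply, Module.Basis.smulTower_apply]
  have hBase : bBase j = AdjoinRoot.root p ^ (j : ℕ) := (AdjoinRoot.powerBasis' hp).basis_eq_pow j
  have hTower : bTower k = AdjoinRoot.root (poly p c) ^ (k : ℕ) := by
    rw [Module.Basis.reindex_apply, PowerBasis.basis_eq_pow]
    rfl
  simp [hBase, hTower, quotEquivTower, eval_X_zero, eval_X_one, Algebra.smul_def, mul_comm]

end QuadraticTower

lemma orGrass3Ideal_eq_ideal (n : ℕ) :
    orGrass3Ideal n =
      QuadraticTower.ideal (Polynomial.X ^ n) ((-1) ^ (n - 1) * Polynomial.X ^ (n - 1)) := by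
  simp [orGrass3Ideal, QuadraticTower.ideal]

/-- In `A = ℚ[p₁,ē]/(p₁ⁿ, ē² - (-1)^{n-1} p₁^{n-1})` (n ≥ 2), the elements
`p₁^i` for `0 ≤ i ≤ n-1` together with `ē·p₁^i` for `0 ≤ i ≤ n-1` form a
`ℚ`-basis; in particular `dim_ℚ A = 2n`. -/
theorem stmt5 (n : ℕ) (hn : 2 ≤ n) :
    ∃ b : Module.Basis (Fin (2 * n)) ℚ (MvPolynomial (Fin 2) ℚ ⧸ orGrass3Ideal n),
      ∀ i : Fin (2 * n),
        b i = Ideal.Quotient.mk (orGrass3Ideal n)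
          (if (i : ℕ) < n then X 0 ^ (i : ℕ) else X 1 * X 0 ^ ((i : ℕ) - n)) := by
  have hdeg : (Polynomial.X ^ n : ℚ[X]).natDegree = n := Polynomial.natDegree_X_pow n
  obtain ⟨b, hb⟩ := hdeg ▸ QuadraticTower.exists_basis _ ((-1) ^ (n - 1) * Polynomial.X ^ (n - 1))
    (Polynomial.monic_X_pow n) (by omega)
  rw [orGrass3Ideal_eq_ideal]
  refine ⟨b.reindex finProdFinEquiv, fun i => ?_⟩
  rw [Module.Basis.reindex_apply, finProdFinEquiv_symm_apply, hb, Fin.coe_divNat, Fin.coe_modNat]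
  split_ifs with hi
  · rw [Nat.div_eq_of_lt hi, Nat.mod_eq_of_lt hi, pow_zero, one_mul]
  · have hdiv : (i : ℕ) / n = 1 := Nat.div_eq_of_lt_le (by omega) (by omega)
    have hmod : (i : ℕ) % n = i - n := by
      rw [Nat.mod_eq_sub_mod (by omega), Nat.mod_eq_of_lt (by omega)]
    rw [hdiv, hmod, pow_one]
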